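/- For a classical structure X, the coKleisli and Kleisli categories of the functor X ⊗ (−) are isomorphic via transposition: the maps Φ : Hom(X ⊗ A, B) ⟶ Hom(A, X ⊗ B), Φ(f) := λ_A⁻¹ ≫ (η_X ⊗ 𝟙_A) ≫ (𝟙_X ⊗ f), and Ψ : Hom(A, X ⊗ B) ⟶ Hom(X ⊗ A, B), Ψ(h) := (𝟙_X ⊗ h) ≫ (ε_X ⊗ 𝟙_B) ≫ λ_B, are mutually inverse; moreover Φ sends the coKleisli identity (⊤ ⊗ 𝟙_A) ≫ λ_A to the Kleisli identity λ_A⁻¹ ≫ (⊥ ⊗ 𝟙_A), and for f : X ⊗ A ⟶ B and g : X ⊗ B ⟶ C it satisfies Φ((Δ ⊗ 𝟙_A) ≫ (𝟙_X ⊗ f) ≫ g) = Φ(f) ≫ (𝟙_X ⊗ Φ(g)) ≫ (∇ ⊗ 𝟙_C). -/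

import Mathlib

open CategoryTheory MonoidalCategory

universe v u

variable {C : Type u} [Category.{v} C] [MonoidalCategory C] [SymmetricCategory C]

/-- A dagger structure on a symmetric monoidal category: an involutive,
identity-on-objects, contravariant functor that coherently preserves the
symmetric monoidal structure. -/
structure Dagger (C : Type u) [Category.{v} C] [MonoidalCategory C]
    [SymmetricCategory C] where
  dag : ∀ {A B : C}, (A ⟶ B) → (B ⟶ A)
  dag_comp : ∀ {A B E : C} (f : A ⟶ B) (g : B ⟶ E), dag (f ≫ g) = dag g ≫ dag f
  dag_id : ∀ A : C, dag (𝟙 A) = 𝟙 A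
  dag_dag : ∀ {A B : C} (f : A ⟶ B), dag (dag f) = f
  dag_tensor : ∀ {A B A' B' : C} (f : A ⟶ B) (g : A' ⟶ B'),
    dag (f ⊗ₘ g) = dag f ⊗ₘ dag g
  dag_assoc : ∀ A B E : C, dag (α_ A B E).hom = (α_ A B E).inv
  dag_lUnit : ∀ A : C, dag (λ_ A).hom = (λ_ A).inv
  dag_rUnit : ∀ A : C, dag (ρ_ A).hom = (ρ_ A).inv
  dag_braid : ∀ A B : C, dag (β_ A B).hom = (β_ A B).inv

/-- Positivity of an endomorphism: `e = g† ≫ g` for some `g : W ⟶ A`. -/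
def Dagger.IsPositive (D : Dagger C) {A : C} (e : A ⟶ A) : Prop :=
  ∃ (W : C) (g : W ⟶ A), e = D.dag g ≫ g

/-- A classical structure: a commutative monoid object which, together with the
daggers of its multiplication and unit, is a special Frobenius algebra. -/
structure ClassicalStructure (D : Dagger C) (X : C) where
  mul : X ⊗ X ⟶ X
  unit : 𝟙_ C ⟶ X
  mul_assoc' : (α_ X X X).hom ≫ (𝟙 X ⊗ₘ mul) ≫ mul = (mul ⊗ₘ 𝟙 X) ≫ mul
  one_mul' : (unit ⊗ₘ 𝟙 X) ≫ mul = (λ_ X).hom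
  mul_one' : (𝟙 X ⊗ₘ unit) ≫ mul = (ρ_ X).hom
  mul_comm' : (β_ X X).hom ≫ mul = mul
  frobenius' : (𝟙 X ⊗ₘ D.dag mul) ≫ (α_ X X X).inv ≫ (mul ⊗ₘ 𝟙 X) = mul ≫ D.dag mul
  special' : D.dag mul ≫ mul = 𝟙 X

namespace ClassicalStructure

variable {D : Dagger C}

/-- The comultiplication `Δ := ∇†`. -/
def comul {X : C} (S : ClassicalStructure D X) : X ⟶ X ⊗ X := D.dag S.mul

/-- The counit `⊤ := ⊥†`. -/
def counit {X : C} (S : ClassicalStructure D X) : X ⟶ 𝟙_ C := D.dag S.unit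

/-- The induced Bell state `η := ⊥ ≫ Δ`. -/
def eta {X : C} (S : ClassicalStructure D X) : 𝟙_ C ⟶ X ⊗ X := S.unit ≫ S.comul

/-- The induced Bell costate `ε := ∇ ≫ ⊤`. -/
def eps {X : C} (S : ClassicalStructure D X) : X ⊗ X ⟶ 𝟙_ C := S.mul ≫ S.counit

/-- The decoherence `Ξ := ∇ ≫ Δ`. -/
def Xi {X : C} (S : ClassicalStructure D X) : X ⊗ X ⟶ X ⊗ X := S.mul ≫ S.comul

end ClassicalStructure

/-- A morphism `f : X ⟶ Y` between classical structures is classical if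
`(Δ_X ⊗ 𝟙_Y) ≫ (𝟙_X ⊗ f ⊗ 𝟙_Y) ≫ (𝟙_X ⊗ ∇_Y)` is positive. -/
def IsClassical {X Y : C} (D : Dagger C) (XS : ClassicalStructure D X)
    (YS : ClassicalStructure D Y) (f : X ⟶ Y) : Prop :=
  D.IsPositive ((XS.comul ⊗ₘ 𝟙 Y) ≫ ((𝟙 X ⊗ₘ f) ⊗ₘ 𝟙 Y) ≫ (α_ X Y Y).hom ≫ (𝟙 X ⊗ₘ YS.mul))

/-- The conjugate `f_* := (η_Y ⊗ 𝟙_X) ≫ (𝟙_Y ⊗ f† ⊗ 𝟙_X) ≫ (𝟙_Y ⊗ ε_X)`. -/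
def conjugate {X Y : C} (D : Dagger C) (XS : ClassicalStructure D X)
    (YS : ClassicalStructure D Y) (f : X ⟶ Y) : X ⟶ Y :=
  (λ_ X).inv ≫ (YS.eta ⊗ₘ 𝟙 X) ≫ (α_ Y Y X).hom ≫ (𝟙 Y ⊗ₘ (D.dag f ⊗ₘ 𝟙 X)) ≫
    (𝟙 Y ⊗ₘ XS.eps) ≫ (ρ_ Y).hom

/-- The convolution `f ⋆ g := Δ_X ≫ (f_* ⊗ g) ≫ ∇_Y`. -/
def convol {X Y : C} (D : Dagger C) (XS : ClassicalStructure D X)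
    (YS : ClassicalStructure D Y) (f g : X ⟶ Y) : X ⟶ Y :=
  XS.comul ≫ (conjugate D XS YS f ⊗ₘ g) ≫ YS.mul

/-- A relation is a convolution-idempotent: `r = r ⋆ r`. -/
def IsRelation {X Y : C} (D : Dagger C) (XS : ClassicalStructure D X)
    (YS : ClassicalStructure D Y) (r : X ⟶ Y) : Prop :=
  r = convol D XS YS r r

/-- Single-valuedness: `r ≫ Δ_Y = Δ_X ≫ (r ⊗ r)`. -/
def SingleValued {X Y : C} (D : Dagger C) (XS : ClassicalStructure D X)
    (YS : ClassicalStructure D Y) (r : X ⟶ Y) : Prop :=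
  r ≫ YS.comul = XS.comul ≫ (r ⊗ₘ r)

/-- Totality: `r ≫ ⊤_Y = ⊤_X`. -/
def TotalRel {X Y : C} (D : Dagger C) (XS : ClassicalStructure D X)
    (YS : ClassicalStructure D Y) (r : X ⟶ Y) : Prop :=
  r ≫ YS.counit = XS.counit

/-- A function is a single-valued total relation. -/
def IsFunctionRel {X Y : C} (D : Dagger C) (XS : ClassicalStructure D X)
    (YS : ClassicalStructure D Y) (r : X ⟶ Y) : Prop :=
  IsRelation D XS YS r ∧ SingleValued D XS YS r ∧ TotalRel D XS YS r

/-- The middle-four interchange `(X ⊗ Y) ⊗ (Z ⊗ W) ⟶ (X ⊗ Z) ⊗ (Y ⊗ W)`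
built from associators and the braiding. -/
def midSwap (X Y Z W : C) : (X ⊗ Y) ⊗ (Z ⊗ W) ⟶ (X ⊗ Z) ⊗ (Y ⊗ W) :=
  (α_ X Y (Z ⊗ W)).hom ≫ (𝟙 X ⊗ₘ (α_ Y Z W).inv) ≫ (𝟙 X ⊗ₘ ((β_ Y Z).hom ⊗ₘ 𝟙 W)) ≫
    (𝟙 X ⊗ₘ (α_ Z Y W).hom) ≫ (α_ X Z (Y ⊗ W)).inv

/-- The multiplication `∇_{X⊗Y} := (𝟙_X ⊗ β_{Y,X} ⊗ 𝟙_Y) ≫ (∇_X ⊗ ∇_Y)` of the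
tensor of two classical structures. -/
def tensorMul {X Y : C} {D : Dagger C} (XS : ClassicalStructure D X)
    (YS : ClassicalStructure D Y) : (X ⊗ Y) ⊗ (X ⊗ Y) ⟶ X ⊗ Y :=
  midSwap X Y X Y ≫ (XS.mul ⊗ₘ YS.mul)

/-- The unit `⊥_{X⊗Y} := ⊥_X ⊗ ⊥_Y` of the tensor of two classical structures. -/
def tensorUnit'' {X Y : C} {D : Dagger C} (XS : ClassicalStructure D X)
    (YS : ClassicalStructure D Y) : 𝟙_ C ⟶ X ⊗ Y :=
  (λ_ (𝟙_ C)).inv ≫ (XS.unit ⊗ₘ YS.unit)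

/-- Complete positivity of `g : X ⊗ X ⟶ Y ⊗ Y` relative to the self-dual compact
structures induced by the classical structures:
`(𝟙_X ⊗ η_X ⊗ 𝟙_Y) ≫ (𝟙_X ⊗ g ⊗ 𝟙_Y) ≫ (𝟙_{X⊗Y} ⊗ ε_Y)` is positive. -/
def IsCP {X Y : C} (D : Dagger C) (XS : ClassicalStructure D X)
    (YS : ClassicalStructure D Y) (g : X ⊗ X ⟶ Y ⊗ Y) : Prop :=
  D.IsPositive ((𝟙 X ⊗ₘ (λ_ Y).inv) ≫ (𝟙 X ⊗ₘ (XS.eta ⊗ₘ 𝟙 Y)) ≫ (𝟙 X ⊗ₘ (g ⊗ₘ 𝟙 Y)) ≫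
    (𝟙 X ⊗ₘ (α_ Y Y Y).hom) ≫ (α_ X Y (Y ⊗ Y)).inv ≫ (𝟙 (X ⊗ Y) ⊗ₘ YS.eps) ≫
    (ρ_ (X ⊗ Y)).hom)

/-- A stochastic morphism: classical and total. -/
def Stochastic {X Y : C} (D : Dagger C) (XS : ClassicalStructure D X)
    (YS : ClassicalStructure D Y) (s : X ⟶ Y) : Prop :=
  IsClassical D XS YS s ∧ TotalRel D XS YS s

/-- A doubly stochastic morphism: both `s` and `s†` are stochastic. -/
def DoublyStochastic {X Y : C} (D : Dagger C) (XS : ClassicalStructure D X)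
    (YS : ClassicalStructure D Y) (s : X ⟶ Y) : Prop :=
  Stochastic D XS YS s ∧ Stochastic D YS XS (D.dag s)

/-- The transposition `Φ(f) := λ_A⁻¹ ≫ (η_X ⊗ 𝟙_A) ≫ (𝟙_X ⊗ f)`. -/
def Phi {X A B : C} (D : Dagger C) (XS : ClassicalStructure D X)
    (f : X ⊗ A ⟶ B) : A ⟶ X ⊗ B :=
  (λ_ A).inv ≫ (XS.eta ⊗ₘ 𝟙 A) ≫ (α_ X X A).hom ≫ (𝟙 X ⊗ₘ f)

/-- The transposition `Ψ(h) := (𝟙_X ⊗ h) ≫ (ε_X ⊗ 𝟙_B) ≫ λ_B`. -/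
def Psi {X A B : C} (D : Dagger C) (XS : ClassicalStructure D X)
    (h : A ⟶ X ⊗ B) : X ⊗ A ⟶ B :=
  (𝟙 X ⊗ₘ h) ≫ (α_ X X B).inv ≫ (XS.eps ⊗ₘ 𝟙 B) ≫ (λ_ B).hom


/-! The Bell state `η` and costate `ε` of a classical structure satisfy the snake equations: each
snake is a Frobenius law followed by a (co)unit law. So `X` is self-dual, and `Φ`, `Ψ` are the two
directions of the transposition bijection `(X ⊗ A ⟶ B) ≃ (A ⟶ X ⊗ B)` of this duality. `Φ` sends
the coKleisli identity to the Kleisli identity by the counit law; it turns coKleisli composition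
into Kleisli composition because both sides reduce to `Φ f ≫ (Δ ▷ B) ≫ α ≫ (X ◁ g)`: on the
coKleisli side by coassociativity, on the Kleisli side by the Frobenius and unit laws. -/

namespace Dagger

variable (D : Dagger C)

theorem dag_whiskerLeft (A : C) {B E : C} (f : B ⟶ E) : D.dag (A ◁ f) = A ◁ D.dag f := by
  rw [← id_tensorHom, D.dag_tensor, D.dag_id, id_tensorHom]

theorem dag_whiskerRight {B E : C} (f : B ⟶ E) (A : C) : D.dag (f ▷ A) = D.dag f ▷ A := by
  rw [← tensorHom_id, D.dag_tensor, D.dag_id, tensorHom_id]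

theorem dag_associator_inv (A B E : C) : D.dag (α_ A B E).inv = (α_ A B E).hom := by
  rw [← D.dag_assoc, D.dag_dag]

end Dagger

namespace ClassicalStructure

variable {D : Dagger C} {X : C} (S : ClassicalStructure D X)

theorem counit_comul : S.comul ≫ S.counit ▷ X = (λ_ X).inv := by
  simpa [D.dag_comp, D.dag_whiskerRight, D.dag_lUnit, comul, counit]
    using congrArg D.dag S.one_mul'

theorem comul_counit : S.comul ≫ X ◁ S.counit = (ρ_ X).inv := by
  simpa [D.dag_comp, D.dag_whiskerLeft, D.dag_rUnit, comul, counit]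
    using congrArg D.dag S.mul_one'

theorem comul_assoc :
    S.comul ≫ X ◁ S.comul = S.comul ≫ S.comul ▷ X ≫ (α_ X X X).hom := by
  have coassoc : S.comul ≫ X ◁ S.comul ≫ (α_ X X X).inv = S.comul ≫ S.comul ▷ X := by
    simpa [D.dag_comp, D.dag_whiskerLeft, D.dag_whiskerRight, D.dag_assoc, comul]
      using congrArg D.dag S.mul_assoc'
  simp [← reassoc_of% coassoc]

theorem comul_whiskerRight_mul :
    S.comul ▷ X ≫ (α_ X X X).hom ≫ X ◁ S.mul = S.mul ≫ S.comul := by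
  simpa [D.dag_comp, D.dag_whiskerLeft, D.dag_whiskerRight, D.dag_associator_inv, D.dag_dag,
    comul] using congrArg D.dag S.frobenius'

theorem whiskerLeft_eta_mul :
    (ρ_ X).inv ≫ X ◁ S.eta ≫ (α_ X X X).inv ≫ S.mul ▷ X = S.comul := by
  have frobenius : X ◁ S.comul ≫ (α_ X X X).inv ≫ S.mul ▷ X = S.mul ≫ S.comul := by
    simpa only [id_tensorHom, tensorHom_id, comul] using S.frobenius'
  have unit_law : X ◁ S.unit ≫ S.mul = (ρ_ X).hom := by
    simpa only [id_tensorHom] using S.mul_one'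
  simp only [eta, MonoidalCategory.whiskerLeft_comp, Category.assoc, frobenius,
    reassoc_of% unit_law, Iso.inv_hom_id_assoc]

theorem eta_whiskerRight_mul :
    (λ_ X).inv ≫ S.eta ▷ X ≫ (α_ X X X).hom ≫ X ◁ S.mul = S.comul := by
  have unit_law : S.unit ▷ X ≫ S.mul = (λ_ X).hom := by
    simpa only [tensorHom_id] using S.one_mul'
  simp only [eta, comp_whiskerRight, Category.assoc, comul_whiskerRight_mul,
    reassoc_of% unit_law, Iso.inv_hom_id_assoc]

abbrev exactPairing : ExactPairing X X where
  coevaluation' := S.eta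
  evaluation' := S.eps
  coevaluation_evaluation' := by
    rw [← cancel_epi (ρ_ X).inv, Iso.inv_hom_id_assoc, eps, comp_whiskerRight,
      reassoc_of% S.whiskerLeft_eta_mul, counit_comul]
  evaluation_coevaluation' := by
    rw [← cancel_epi (λ_ X).inv, Iso.inv_hom_id_assoc, eps, MonoidalCategory.whiskerLeft_comp,
      reassoc_of% S.eta_whiskerRight_mul, comul_counit]

def transposeEquiv (A B : C) : (X ⊗ A ⟶ B) ≃ (A ⟶ X ⊗ B) :=
  letI := S.exactPairing
  tensorLeftHomEquiv A X X B

theorem transposeEquiv_apply {A B : C} (f : X ⊗ A ⟶ B) :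
    S.transposeEquiv A B f = Phi D S f := by
  simp only [transposeEquiv, tensorLeftHomEquiv, Equiv.coe_fn_mk, Phi, tensorHom_id, id_tensorHom]
  rfl

theorem transposeEquiv_symm_apply {A B : C} (h : A ⟶ X ⊗ B) :
    (S.transposeEquiv A B).symm h = Psi D S h := by
  simp only [transposeEquiv, tensorLeftHomEquiv, Equiv.coe_fn_symm_mk, Psi, tensorHom_id,
    id_tensorHom]
  rfl

theorem psi_phi {A B : C} (f : X ⊗ A ⟶ B) : Psi D S (Phi D S f) = f := by
  rw [← transposeEquiv_apply, ← transposeEquiv_symm_apply, Equiv.symm_apply_apply]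

theorem phi_psi {A B : C} (h : A ⟶ X ⊗ B) : Phi D S (Psi D S h) = h := by
  rw [← transposeEquiv_apply, ← transposeEquiv_symm_apply, Equiv.apply_symm_apply]

theorem phi_comp {A B E : C} (f : X ⊗ A ⟶ B) (g : B ⟶ E) :
    Phi D S (f ≫ g) = Phi D S f ≫ X ◁ g := by
  simp only [← transposeEquiv_apply]
  let := S.exactPairing
  exact tensorLeftHomEquiv_naturality f g

def coKleisliId (A : C) : X ⊗ A ⟶ A := (S.counit ⊗ₘ 𝟙 A) ≫ (λ_ A).hom

def kleisliId (A : C) : A ⟶ X ⊗ A := (λ_ A).inv ≫ (S.unit ⊗ₘ 𝟙 A)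

def coKleisliComp {A B E : C} (f : X ⊗ A ⟶ B) (g : X ⊗ B ⟶ E) : X ⊗ A ⟶ E :=
  (S.comul ⊗ₘ 𝟙 A) ≫ (α_ X X A).hom ≫ (𝟙 X ⊗ₘ f) ≫ g

def kleisliComp {A B E : C} (h : A ⟶ X ⊗ B) (k : B ⟶ X ⊗ E) : A ⟶ X ⊗ E :=
  h ≫ (𝟙 X ⊗ₘ k) ≫ (α_ X X E).inv ≫ (S.mul ⊗ₘ 𝟙 E)

theorem phi_coKleisliId (A : C) : Phi D S (S.coKleisliId A) = S.kleisliId A := by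
  have eta_counit : S.eta ≫ X ◁ S.counit = S.unit ≫ (ρ_ X).inv := by
    rw [eta, Category.assoc, comul_counit]
  calc Phi D S (S.coKleisliId A)
      = (λ_ A).inv ≫ ((S.eta ≫ X ◁ S.counit) ≫ (ρ_ X).hom) ▷ A := by
        simp only [Phi, coKleisliId, id_tensorHom, tensorHom_id]
        monoidal
    _ = S.kleisliId A := by
        simp [eta_counit, kleisliId]

theorem phi_comul_whiskerRight_comp {A B : C} (f : X ⊗ A ⟶ B) :
    Phi D S (S.comul ▷ A ≫ (α_ X X A).hom ≫ X ◁ f) =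
      Phi D S f ≫ S.comul ▷ B ≫ (α_ X X B).hom := by
  calc Phi D S (S.comul ▷ A ≫ (α_ X X A).hom ≫ X ◁ f)
      = (λ_ A).inv ≫ (S.eta ≫ X ◁ S.comul) ▷ A ≫ (α_ X (X ⊗ X) A).hom ≫
          X ◁ (α_ X X A).hom ≫ X ◁ X ◁ f := by
        simp only [Phi, tensorHom_id, id_tensorHom]
        monoidal
    _ = (λ_ A).inv ≫ S.eta ▷ A ≫ (α_ X X A).hom ≫ S.comul ▷ (X ⊗ A) ≫
          (α_ X X (X ⊗ A)).hom ≫ X ◁ X ◁ f := by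
        rw [eta, Category.assoc, comul_assoc]
        monoidal
    _ = Phi D S f ≫ S.comul ▷ B ≫ (α_ X X B).hom := by
        simp only [Phi, tensorHom_id, id_tensorHom, Category.assoc,
          ← associator_naturality_right, whisker_exchange_assoc]

theorem whiskerLeft_phi_comp_mul {B E : C} (g : X ⊗ B ⟶ E) :
    X ◁ Phi D S g ≫ (α_ X X E).inv ≫ S.mul ▷ E = S.comul ▷ B ≫ (α_ X X B).hom ≫ X ◁ g := by
  calc X ◁ Phi D S g ≫ (α_ X X E).inv ≫ S.mul ▷ E
      = X ◁ ((λ_ B).inv ≫ S.eta ▷ B ≫ (α_ X X B).hom) ≫ (α_ X X (X ⊗ B)).inv ≫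
          S.mul ▷ (X ⊗ B) ≫ X ◁ g := by
        simp only [Phi, tensorHom_id, id_tensorHom, MonoidalCategory.whiskerLeft_comp,
          Category.assoc, associator_inv_naturality_right_assoc, whisker_exchange]
    _ = ((ρ_ X).inv ≫ X ◁ S.eta ≫ (α_ X X X).inv ≫ S.mul ▷ X) ▷ B ≫ (α_ X X B).hom ≫
          X ◁ g := by
        monoidal
    _ = S.comul ▷ B ≫ (α_ X X B).hom ≫ X ◁ g := by
        rw [whiskerLeft_eta_mul]

theorem phi_coKleisliComp {A B E : C} (f : X ⊗ A ⟶ B) (g : X ⊗ B ⟶ E) :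
    Phi D S (S.coKleisliComp f g) = S.kleisliComp (Phi D S f) (Phi D S g) := by
  calc Phi D S (S.coKleisliComp f g)
      = Phi D S (S.comul ▷ A ≫ (α_ X X A).hom ≫ X ◁ f) ≫ X ◁ g := by
        simp [coKleisliComp, ← phi_comp]
    _ = S.kleisliComp (Phi D S f) (Phi D S g) := by
        simp [phi_comul_whiskerRight_comp, kleisliComp, whiskerLeft_phi_comp_mul]

end ClassicalStructure

/-- `Φ` and `Ψ` are mutually inverse, `Φ` sends the coKleisli
identity to the Kleisli identity, and `Φ` turns coKleisli composition into
Kleisli composition. -/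
theorem coKleisli_Kleisli_iso {X : C} (D : Dagger C)
    (XS : ClassicalStructure D X) :
    (∀ (A B : C) (f : X ⊗ A ⟶ B), Psi D XS (Phi D XS f) = f) ∧
    (∀ (A B : C) (h : A ⟶ X ⊗ B), Phi D XS (Psi D XS h) = h) ∧
    (∀ A : C, Phi D XS ((XS.counit ⊗ₘ 𝟙 A) ≫ (λ_ A).hom) =
      (λ_ A).inv ≫ (XS.unit ⊗ₘ 𝟙 A)) ∧
    (∀ (A B E : C) (f : X ⊗ A ⟶ B) (g : X ⊗ B ⟶ E),
      Phi D XS ((XS.comul ⊗ₘ 𝟙 A) ≫ (α_ X X A).hom ≫ (𝟙 X ⊗ₘ f) ≫ g) =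
        Phi D XS f ≫ (𝟙 X ⊗ₘ Phi D XS g) ≫ (α_ X X E).inv ≫ (XS.mul ⊗ₘ 𝟙 E)) :=
  ⟨fun _ _ => XS.psi_phi, fun _ _ => XS.phi_psi, XS.phi_coKleisliId,
    fun _ _ _ => XS.phi_coKleisliComp⟩
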